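/- (Corollary 8, part 𝒲 ⊆ 𝒱*) Let 𝒞 be a nonempty compact set of cost matrices and let 𝒱* be the unique nonempty compact set with F_𝒞(𝒱*) = 𝒱*. Let {C^k}_{k ∈ ℕ} be any sequence with C^k ∈ 𝒞, let V⁰ ∈ ℝ^S, define V^{k+1} = f_{C^k}(V^k), and suppose the sequence V^k converges (in the sup norm) to some V ∈ ℝ^S. Then V ∈ 𝒱*. -/

import Mathlib

open Metric

/-- The Bellman operator for a discounted MDP with transition kernel `P`,
discount factor `γ` and cost matrix `C`. -/
noncomputable def bellman (S A : ℕ) (P : Fin S → Fin S → Fin A → ℝ) (γ : ℝ)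
    (C : Fin S → Fin A → ℝ) (V : Fin S → ℝ) : Fin S → ℝ :=
  fun s => ⨅ a : Fin A, (C s a + γ * ∑ s' : Fin S, P s' s a * V s')

/-- The set-based Bellman operator associated with a set `𝒞` of cost matrices. -/
noncomputable def setBellman (S A : ℕ) (P : Fin S → Fin S → Fin A → ℝ) (γ : ℝ)
    (𝒞 : Set (Fin S → Fin A → ℝ)) (𝒱 : Set (Fin S → ℝ)) : Set (Fin S → ℝ) :=
  closure (⋃ C ∈ 𝒞, ⋃ V ∈ 𝒱, {bellman S A P γ C V})

/-!
Each `f_C` with `C ∈ 𝒞` maps `𝒱*` into itself (because `𝒱* = F_𝒞(𝒱*)`) and is a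
`γ`-contraction for the sup norm. Running the same maps `f_{C^k}` from a point of `𝒱*` gives a
sequence in `𝒱*` at distance `O(γ^k)` from `V^k`, so the limit of `V^k` lies in the closed set `𝒱*`.
-/

open Filter Topology

section Infimum

variable {ι : Type*} [Finite ι] [Nonempty ι]

lemma ciInf_le_ciInf_add {x y : ι → ℝ} {c : ℝ} (h : ∀ i, x i ≤ y i + c) :
    ⨅ i, x i ≤ (⨅ i, y i) + c := by
  rw [← sub_le_iff_le_add]
  refine le_ciInf fun i => ?_
  linarith [ciInf_le (Set.finite_range x).bddBelow i, h i]

lemma dist_ciInf_le {x y : ι → ℝ} {c : ℝ} (h : ∀ i, dist (x i) (y i) ≤ c) :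
    dist (⨅ i, x i) (⨅ i, y i) ≤ c := by
  have habs i : |x i - y i| ≤ c := by simpa only [Real.dist_eq] using h i
  have hy_le : ⨅ i, y i ≤ (⨅ i, x i) + c :=
    ciInf_le_ciInf_add fun i => by linarith [(abs_le.mp (habs i)).1]
  have hx_le : ⨅ i, x i ≤ (⨅ i, y i) + c :=
    ciInf_le_ciInf_add fun i => by linarith [(abs_le.mp (habs i)).2]
  rw [Real.dist_eq, abs_le]
  constructor <;> linarith

end Infimum

lemma dist_weighted_sum_le {ι : Type*} [Fintype ι] {p : ι → ℝ} (hp0 : ∀ i, 0 ≤ p i)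
    (hp1 : ∑ i, p i = 1) (V W : ι → ℝ) :
    dist (∑ i, p i * V i) (∑ i, p i * W i) ≤ dist V W :=
  calc dist (∑ i, p i * V i) (∑ i, p i * W i)
      ≤ ∑ i, dist (p i * V i) (p i * W i) := dist_sum_sum_le _ _ _
    _ = ∑ i, p i * dist (V i) (W i) := by
        simp only [Real.dist_eq, ← mul_sub, abs_mul, abs_of_nonneg (hp0 _)]
    _ ≤ ∑ i, p i * dist V W :=
        Finset.sum_le_sum fun i _ => mul_le_mul_of_nonneg_left (dist_le_pi_dist V W i) (hp0 i)
    _ = dist V W := by rw [← Finset.sum_mul, hp1, one_mul]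

section Bellman

variable {S A : ℕ} {P : Fin S → Fin S → Fin A → ℝ} {γ : ℝ}

lemma dist_bellman_le (hA : 0 < A) (hP0 : ∀ s' s a, 0 ≤ P s' s a)
    (hP1 : ∀ s a, ∑ s' : Fin S, P s' s a = 1) (hγ : 0 ≤ γ) (C : Fin S → Fin A → ℝ)
    (V W : Fin S → ℝ) :
    dist (bellman S A P γ C V) (bellman S A P γ C W) ≤ γ * dist V W := by
  have : Nonempty (Fin A) := ⟨⟨0, hA⟩⟩
  refine (dist_pi_le_iff (by positivity)).2 fun s => dist_ciInf_le fun a => ?_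
  rw [dist_add_left, Real.dist_eq, ← mul_sub, abs_mul, abs_of_nonneg hγ, ← Real.dist_eq]
  exact mul_le_mul_of_nonneg_left
    (dist_weighted_sum_le (fun s' => hP0 s' s a) (hP1 s a) V W) hγ

lemma bellman_mem_setBellman {𝒞 : Set (Fin S → Fin A → ℝ)} {𝒱 : Set (Fin S → ℝ)}
    {C : Fin S → Fin A → ℝ} {V : Fin S → ℝ} (hC : C ∈ 𝒞) (hV : V ∈ 𝒱) :
    bellman S A P γ C V ∈ setBellman S A P γ 𝒞 𝒱 :=
  subset_closure (Set.mem_biUnion hC (Set.mem_biUnion hV rfl))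

lemma isClosed_setBellman (𝒞 : Set (Fin S → Fin A → ℝ)) (𝒱 : Set (Fin S → ℝ)) :
    IsClosed (setBellman S A P γ 𝒞 𝒱) :=
  isClosed_closure

end Bellman

section Contraction

variable {X : Type*} [PseudoMetricSpace X] {f : ℕ → X → X} {γ : ℝ}

lemma dist_orbits_le_pow_mul (hγ : 0 ≤ γ) (hf : ∀ k u v, dist (f k u) (f k v) ≤ γ * dist u v)
    {x y : ℕ → X} (hx : ∀ k, x (k + 1) = f k (x k)) (hy : ∀ k, y (k + 1) = f k (y k)) (k : ℕ) :
    dist (x k) (y k) ≤ γ ^ k * dist (x 0) (y 0) := by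
  induction k with
  | zero => simp
  | succ k ih =>
    calc dist (x (k + 1)) (y (k + 1)) ≤ γ * dist (x k) (y k) := by rw [hx, hy]; exact hf _ _ _
      _ ≤ γ * (γ ^ k * dist (x 0) (y 0)) := mul_le_mul_of_nonneg_left ih hγ
      _ = γ ^ (k + 1) * dist (x 0) (y 0) := by ring

lemma IsClosed.mem_of_tendsto_orbit {K : Set X} (hK : IsClosed K) (hKne : K.Nonempty)
    (hγ0 : 0 ≤ γ) (hγ1 : γ < 1) (hf : ∀ k u v, dist (f k u) (f k v) ≤ γ * dist u v)
    (hfK : ∀ k, Set.MapsTo (f k) K K) {x : ℕ → X} (hx : ∀ k, x (k + 1) = f k (x k)) {a : X}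
    (ha : Tendsto x atTop (𝓝 a)) : a ∈ K := by
  obtain ⟨y₀, hy₀⟩ := hKne
  let y : ℕ → X := fun k => Nat.rec y₀ f k
  have hyK : ∀ k, y k ∈ K := fun k => by
    induction k with
    | zero => exact hy₀
    | succ k ih => exact hfK k ih
  have hdist : Tendsto (fun k => dist (x k) (y k)) atTop (𝓝 0) := by
    refine squeeze_zero (fun _ => dist_nonneg)
      (dist_orbits_le_pow_mul hγ0 hf hx (fun _ => rfl)) ?_
    simpa using (tendsto_pow_atTop_nhds_zero_of_lt_one hγ0 hγ1).mul_const (dist (x 0) (y 0))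
  exact hK.mem_of_tendsto (ha.congr_dist hdist) (Eventually.of_forall hyK)

end Contraction

theorem limit_point_mem_fixed_point_set_general (S A : ℕ) (hA : 0 < A)
    (P : Fin S → Fin S → Fin A → ℝ)
    (hP0 : ∀ s' s a, 0 ≤ P s' s a)
    (hP1 : ∀ s a, ∑ s' : Fin S, P s' s a = 1)
    (γ : ℝ) (hγ : γ ∈ Set.Ioo (0 : ℝ) 1)
    (𝒞 : Set (Fin S → Fin A → ℝ))
    (Vstar : Set (Fin S → ℝ)) (hVne : Vstar.Nonempty)
    (hVfix : setBellman S A P γ 𝒞 Vstar = Vstar)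
    (Cseq : ℕ → (Fin S → Fin A → ℝ)) (hCseq : ∀ k, Cseq k ∈ 𝒞)
    (V : ℕ → (Fin S → ℝ))
    (hV : ∀ k, V (k + 1) = bellman S A P γ (Cseq k) (V k))
    (Vlim : Fin S → ℝ)
    (hlim : Filter.Tendsto V Filter.atTop (nhds Vlim)) :
    Vlim ∈ Vstar := by
  have hclosed : IsClosed Vstar := hVfix ▸ isClosed_setBellman 𝒞 Vstar
  have hmaps : ∀ k, Set.MapsTo (bellman S A P γ (Cseq k)) Vstar Vstar := fun k W hW =>
    hVfix ▸ bellman_mem_setBellman (hCseq k) hW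
  exact hclosed.mem_of_tendsto_orbit hVne hγ.1.le hγ.2
    (fun _ => dist_bellman_le hA hP0 hP1 hγ.1.le _) hmaps hV hlim

theorem limit_point_mem_fixed_point_set (S A : ℕ) (hS : 0 < S) (hA : 0 < A)
    (P : Fin S → Fin S → Fin A → ℝ)
    (hP0 : ∀ s' s a, 0 ≤ P s' s a)
    (hP1 : ∀ s a, ∑ s' : Fin S, P s' s a = 1)
    (γ : ℝ) (hγ : γ ∈ Set.Ioo (0 : ℝ) 1)
    (𝒞 : Set (Fin S → Fin A → ℝ)) (h𝒞ne : 𝒞.Nonempty) (h𝒞c : IsCompact 𝒞)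
    (Vstar : Set (Fin S → ℝ)) (hVne : Vstar.Nonempty) (hVc : IsCompact Vstar)
    (hVfix : setBellman S A P γ 𝒞 Vstar = Vstar)
    (Cseq : ℕ → (Fin S → Fin A → ℝ)) (hCseq : ∀ k, Cseq k ∈ 𝒞)
    (V : ℕ → (Fin S → ℝ))
    (hV : ∀ k, V (k + 1) = bellman S A P γ (Cseq k) (V k))
    (Vlim : Fin S → ℝ)
    (hlim : Filter.Tendsto V Filter.atTop (nhds Vlim)) :
    Vlim ∈ Vstar :=
  limit_point_mem_fixed_point_set_general S A hA P hP0 hP1 γ hγ 𝒞 Vstar hVne hVfix Cseq hCseq V hV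
    Vlim hlim
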